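/- arXiv:2307.15756 — 5 statements merged into one kernel-verified Lean document; each statement's English description precedes it below -/
import Mathlib

section
/- Let X_m, Y_m ∈ ℤ[t] be the polynomials satisfying A^m = X_m(trace A)·1 + Y_m(trace A)·A for all A ∈ SL(2,R) over any commutative ring R (defined by the recursion X_0 = 1, Y_0 = 0, X_{m+1} = -Y_m, Y_{m+1} = X_m + t·Y_m). Then Y_m divides X_m^2 - 1 in ℤ[t]. -/
/-- The pair `(X_m, Y_m)` of integer polynomials defined by the recursion
`X_0 = 1`, `Y_0 = 0`, `X_{m+1} = -Y_m`, `Y_{m+1} = X_m + t·Y_m`,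
so that `A^m = X_m(tr A)·1 + Y_m(tr A)·A` for `A ∈ SL(2,R)`. -/
noncomputable def XY : ℕ → Polynomial ℤ × Polynomial ℤ
  | 0 => (1, 0)
  | m + 1 => (-(XY m).2, (XY m).1 + Polynomial.X * (XY m).2)

lemma XY_inv (m : ℕ) :
    (XY m).1 ^ 2 + Polynomial.X * (XY m).1 * (XY m).2 + (XY m).2 ^ 2 = 1 := by
  induction m with
  | zero => simp [XY]
  | succ n ih =>
    simp only [XY]
    linear_combination ih

theorem Y_dvd_X_sq_sub_one (m : ℕ) :
    (XY m).2 ∣ (XY m).1 ^ 2 - 1 := by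
  exact ⟨-(Polynomial.X * (XY m).1 + (XY m).2), by linear_combination XY_inv m⟩
end

section
/- Let R be a commutative ring, A = [[a,b],[c,d]] ∈ SL(2,R), and m a natural number. Write A^m = [[x + y·a, y·b],[y·c, x + y·d]] where x = X_m(a+d) and y = Y_m(a+d) as in the Cayley–Hamilton expression A^m = x·1 + y·A. Then x + y·a ≡ a^m (mod b) and x + y·a ≡ a^m (mod c), i.e., b divides (x + y·a) - a^m and c divides (x + y·a) - a^m. -/
lemma bc_dvd_aux {R : Type*} [CommRing R]
    (a b c d : R) (hdet : a * d - b * c = 1) (m : ℕ) :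
    b * c ∣ (Polynomial.aeval (a + d) (XY m).1
      + Polynomial.aeval (a + d) (XY m).2 * a) - a ^ m := by
  induction m with
  | zero => simp [XY]
  | succ m ih =>
    obtain ⟨k, hk⟩ := ih
    refine ⟨Polynomial.aeval (a + d) (XY m).2 + a * k, ?_⟩
    have hbc : b * c = a * d - 1 := by linear_combination -hdet
    simp only [XY, map_neg, map_add, map_mul, Polynomial.aeval_X]
    linear_combination a * hk + (Polynomial.aeval (a + d) (XY m).2) * hdet

theorem diag_entry_congruent_to_power {R : Type*} [CommRing R]
    (a b c d : R) (hdet : a * d - b * c = 1) (m : ℕ)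
    (x y : R) (hx : x = Polynomial.aeval (a + d) (XY m).1)
    (hy : y = Polynomial.aeval (a + d) (XY m).2) :
    b ∣ (x + y * a) - a ^ m ∧ c ∣ (x + y * a) - a ^ m := by
  subst hx hy
  have h := bc_dvd_aux a b c d hdet m
  exact ⟨(dvd_mul_right b c).trans h, (dvd_mul_left c b).trans h⟩
end

section
/- Let R be a commutative ring and let A = [[a,b,0],[s·c,d,0],[0,0,1]] ∈ SL(3,R) with s = s₁s₂, where s₁ divides a-1, s₁ divides d-1, s₂ divides a+1, s₂ divides d+1. Let t₁, t₂ ∈ R satisfy a = 1 + s₁t₁ = -1 + s₂t₂. Then the following explicit identity of 3×3 matrices holds: t₁₃(s₂) · t₂₁(c) · t₃₁(-t₂) · t₁₃(-t₁) · t₂₃(-s₂c) · t₃₁(-s₁) · ( A · t₃₁(s₁) ) · t₁₂(-b) · t₁₃(t₁+s₂) · t₃₁(-t₂) · t₃₂(-s₁b) = [[-a, -s·b, 0],[c, d, 0],[0, 0, -1]], where the factors multiply A in the order described (left factors applied on the left, right factors on the right as in the proof). -/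
/-!
Every factor `t i j ξ` is an elementary row (on the left) or column (on the right) operation, so
the product can be followed through four intermediate matrices. The relation `s = s₁ s₂` lets the
row operations by multiples of `s₁` and `s₂` cancel the entry `s c`, while `a = 1 + s₁ t₁` and
`a = -1 + s₂ t₂` turn the pivot `a` into `1` and then the corner entry into `-1`.
-/

/-- The elementary transvection `t_{ij}(ξ) = 1 + ξ e_{ij}` in `SL(3,R)`
(indices `0,1,2` correspond to `1,2,3`). -/
def t {R : Type*} [CommRing R] (i j : Fin 3) (ξ : R) : Matrix (Fin 3) (Fin 3) R :=
  1 + Matrix.single i j ξ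

namespace Matrix

variable {n m R : Type*} [Fintype n] [DecidableEq n] [CommRing R]

theorem transvection_mul_eq_updateRow (i j : n) (c : R) (M : Matrix n m R) :
    transvection i j c * M = M.updateRow i (M i + c • M j) := by
  ext a b
  by_cases ha : a = i
  · subst ha; simp
  · simp [ha]

theorem mul_transvection_eq_updateCol (i j : n) (c : R) (M : Matrix m n R) :
    M * transvection i j c = M.updateCol j (fun k => M k j + c * M k i) := by
  ext a b
  by_cases hb : b = j
  · subst hb; simp
  · simp [hb]

end Matrix

open Matrix

section

variable {R : Type*} [CommRing R]

theorem t_eq_transvection (i j : Fin 3) (ξ : R) : t i j ξ = transvection i j ξ := rfl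

theorem swindle_first_column (a b c d s s₁ s₂ t₁ : R) (hs : s = s₁ * s₂)
    (ha : a = 1 + s₁ * t₁) :
    t 2 0 (-s₁) * (t 0 2 (-t₁) * (t 1 2 (-(s₂ * c)) *
      (!![a, b, 0; s * c, d, 0; 0, 0, 1] * t 2 0 s₁))) =
      !![1, b, -t₁; 0, d, -(s₂ * c); 0, -(s₁ * b), a] := by
  subst hs ha
  simp only [t_eq_transvection, transvection_mul_eq_updateRow, mul_transvection_eq_updateCol]
  ext i j
  fin_cases i <;> fin_cases j <;> simp [updateRow_apply] <;> ring

theorem swindle_first_row (a b c d s₁ s₂ t₁ : R) :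
    !![1, b, -t₁; 0, d, -(s₂ * c); 0, -(s₁ * b), a] * t 0 1 (-b) * t 0 2 (t₁ + s₂) =
      !![1, 0, s₂; 0, d, -(s₂ * c); 0, -(s₁ * b), a] := by
  simp only [t_eq_transvection, mul_transvection_eq_updateCol]
  ext i j
  fin_cases i <;> fin_cases j <;> simp

theorem swindle_second_row (a b c d s₁ s₂ t₂ : R) (ha : a = -1 + s₂ * t₂) :
    t 1 0 c * (t 2 0 (-t₂) * !![1, 0, s₂; 0, d, -(s₂ * c); 0, -(s₁ * b), a]) =
      !![1, 0, s₂; c, d, 0; -t₂, -(s₁ * b), -1] := by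
  subst ha
  simp only [t_eq_transvection, transvection_mul_eq_updateRow]
  ext i j
  fin_cases i <;> fin_cases j <;> simp [updateRow_apply] <;> ring

theorem swindle_third_row (a b c d s s₁ s₂ t₂ : R) (hs : s = s₁ * s₂)
    (ha : a = -1 + s₂ * t₂) :
    t 0 2 s₂ * !![1, 0, s₂; c, d, 0; -t₂, -(s₁ * b), -1] * t 2 0 (-t₂) * t 2 1 (-(s₁ * b)) =
      !![-a, -(s * b), 0; c, d, 0; 0, 0, -1] := by
  subst hs ha
  simp only [t_eq_transvection, transvection_mul_eq_updateRow, mul_transvection_eq_updateCol]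
  ext i j
  fin_cases i <;> fin_cases j <;> simp [updateRow_apply] <;> ring

end

theorem swindling_SL3_explicit_general {R : Type*} [CommRing R]
    (a b c d s s₁ s₂ t₁ t₂ : R)
    (hs : s = s₁ * s₂)
    (ha1 : a = 1 + s₁ * t₁) (ha2 : a = -1 + s₂ * t₂) :
    t 0 2 s₂ *
      (t 1 0 c * (t 2 0 (-t₂) *
        ((t 2 0 (-s₁) *
            (t 0 2 (-t₁) * (t 1 2 (-(s₂ * c)) *
              (!![a, b, 0; s * c, d, 0; 0, 0, 1] * t 2 0 s₁))))
          * t 0 1 (-b) * t 0 2 (t₁ + s₂))))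
      * t 2 0 (-t₂) * t 2 1 (-(s₁ * b))
      = !![-a, -(s * b), 0; c, d, 0; 0, 0, -1] := by
  rw [swindle_first_column a b c d s s₁ s₂ t₁ hs ha1, swindle_first_row,
    swindle_second_row a b c d s₁ s₂ t₂ ha2, swindle_third_row a b c d s s₁ s₂ t₂ hs ha2]

/-- Starting from `A`, multiply on the right by `t₃₁(s₁)`; on the left by
`t₂₃(-s₂c)` then `t₁₃(-t₁)`; on the left by `t₃₁(-s₁)`; on the right by
`t₁₂(-b)` then `t₁₃(t₁+s₂)`; on the left by `t₃₁(-t₂)` then `t₂₁(c)`;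
on the left by `t₁₃(s₂)`; on the right by `t₃₁(-t₂)` then `t₃₂(-s₁b)`;
the result is `[[-a, -sb, 0],[c, d, 0],[0, 0, -1]]`. -/
theorem swindling_SL3_explicit {R : Type*} [CommRing R]
    (a b c d s s₁ s₂ t₁ t₂ : R)
    (hdet : a * d - s * b * c = 1) (hs : s = s₁ * s₂)
    (ha1 : a = 1 + s₁ * t₁) (ha2 : a = -1 + s₂ * t₂)
    (hd1 : s₁ ∣ d - 1) (hd2 : s₂ ∣ d + 1) :
    t 0 2 s₂ *
      (t 1 0 c * (t 2 0 (-t₂) *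
        ((t 2 0 (-s₁) *
            (t 0 2 (-t₁) * (t 1 2 (-(s₂ * c)) *
              (!![a, b, 0; s * c, d, 0; 0, 0, 1] * t 2 0 s₁))))
          * t 0 1 (-b) * t 0 2 (t₁ + s₂))))
      * t 2 0 (-t₂) * t 2 1 (-(s₁ * b))
      = !![-a, -(s * b), 0; c, d, 0; 0, 0, -1] :=
  swindling_SL3_explicit_general a b c d s s₁ s₂ t₁ t₂ hs ha1 ha2
end

section
/- Let n ≥ 2, let I be a set, and let (R_i) be a family of commutative rings. Fix L ∈ ℕ and suppose g_i ∈ SL(n, R_i) for each i ∈ I, such that each g_i is a product of at most L elementary transvections in SL(n, R_i). Then the element g = (g_i) of SL(n, ∏ R_i) is a product of at most L·n·(n-1) elementary transvections of SL(n, ∏ R_i). -/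
/-- An elementary transvection `t_{jk}(ξ) = 1 + ξ e_{jk}`, `j ≠ k`, in `SL(n,R)`. -/
def IsElementary {n : ℕ} {R : Type*} [CommRing R] (E : Matrix (Fin n) (Fin n) R) : Prop :=
  ∃ (j k : Fin n) (ξ : R), j ≠ k ∧ E = 1 + Matrix.single j k ξ

private lemma isElementary_one {n : ℕ} (hn : 2 ≤ n) {R : Type*} [CommRing R] :
    IsElementary (1 : Matrix (Fin n) (Fin n) R) := by
  refine ⟨⟨0, by omega⟩, ⟨1, by omega⟩, 0, ?_, by simp⟩
  simp [Fin.ext_iff]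

private lemma map_stdBasis {n : ℕ} {R S : Type*} [Semiring R] [Semiring S]
    (f : R →+* S) (a b : Fin n) (c : R) :
    (Matrix.single a b c).map f = Matrix.single a b (f c) := by
  ext x y
  simp only [Matrix.map_apply, Matrix.single, Matrix.of_apply, apply_ite f, map_zero]

private lemma prod_map_single {α M : Type*} [Monoid M] :
    ∀ (P : List α), P.Nodup → ∀ (p0 : α), p0 ∈ P → ∀ (f : α → M),
      (∀ p ∈ P, p ≠ p0 → f p = 1) → (P.map f).prod = f p0 := by
  intro P
  induction P with
  | nil => intro _ p0 h; simp at h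
  | cons a t ih =>
    intro hnd p0 hp0 f hf
    rcases List.mem_cons.mp hp0 with h | h
    · subst h
      have ht : ∀ x ∈ t.map f, x = 1 := by
        intro x hx
        rcases List.mem_map.mp hx with ⟨p, hp, rfl⟩
        exact hf p (List.mem_cons_of_mem _ hp) (fun e => (List.nodup_cons.mp hnd).1 (e ▸ hp))
      simp [List.prod_eq_one ht]
    · have ha : f a = 1 := hf a List.mem_cons_self
        (fun e => (List.nodup_cons.mp hnd).1 (e ▸ h))
      have := ih (List.nodup_cons.mp hnd).2 p0 h f
        (fun p hp hne => hf p (List.mem_cons_of_mem _ hp) hne)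
      simp [ha, this]

theorem product_ring_bounded_elementary
    {n : ℕ} (hn : 2 ≤ n) {I : Type*} (R : I → Type*) [∀ i, CommRing (R i)]
    (L : ℕ) (g : ∀ i, Matrix (Fin n) (Fin n) (R i))
    (hdet : ∀ i, (g i).det = 1)
    (hgen : ∀ i, ∃ l : List (Matrix (Fin n) (Fin n) (R i)),
      l.length ≤ L ∧ (∀ E ∈ l, IsElementary E) ∧ l.prod = g i) :
    ∃ l : List (Matrix (Fin n) (Fin n) (∀ i, R i)),
      l.length ≤ L * n * (n - 1) ∧ (∀ E ∈ l, IsElementary E) ∧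
      l.prod = Matrix.of (fun j k => fun i => g i j k) := by
  classical
  choose l hlen helem hprod using hgen
  -- padded lists of length exactly L
  set pad : ∀ i, List (Matrix (Fin n) (Fin n) (R i)) :=
    fun i => l i ++ List.replicate (L - (l i).length) 1 with hpad
  have hpadlen : ∀ i, (pad i).length = L := by
    intro i; have := hlen i; simp [hpad]; omega
  have hpadelem : ∀ i, ∀ E ∈ pad i, IsElementary E := by
    intro i E hE
    rcases List.mem_append.mp hE with h | h
    · exact helem i E h
    · rw [List.eq_of_mem_replicate h]; exact isElementary_one hn
  have hpadprod : ∀ i, (pad i).prod = g i := by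
    intro i; simp [hpad, List.prod_replicate, hprod i]
  -- entries of padded list as functions Fin L → matrices
  set padget : ∀ i, Fin L → Matrix (Fin n) (Fin n) (R i) :=
    fun i m => (pad i).get (Fin.cast (hpadlen i).symm m) with hpadget
  have hofn : ∀ i, List.ofFn (padget i) = pad i := by
    intro i
    apply List.ext_get
    · simp [hpadlen i]
    · intro m h1 h2
      simp [hpadget, List.get_ofFn]
  have hget : ∀ i m, ∃ (j k : Fin n) (ξ : R i),
      j ≠ k ∧ padget i m = 1 + Matrix.single j k ξ := by
    intro i m
    exact hpadelem i _ (List.get_mem _ _)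
  choose j k ξ hjk heq using hget
  -- list of off-diagonal positions
  set P : List (Fin n × Fin n) := (Finset.univ.offDiag (α := Fin n)).toList with hP
  have hPnd : P.Nodup := Finset.nodup_toList _
  have hPmem : ∀ p : Fin n × Fin n, p ∈ P ↔ p.1 ≠ p.2 := by
    intro p; simp [hP, Finset.mem_offDiag]
  have hPlen : P.length = n * n - n := by
    simp [hP, Finset.length_toList, Finset.offDiag_card]
  -- the transvections in the product ring
  set F : Fin L → (Fin n × Fin n) → Matrix (Fin n) (Fin n) (∀ i, R i) :=
    fun m p => 1 + Matrix.single p.1 p.2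
      (fun i => if (j i m, k i m) = p then ξ i m else 0) with hF
  refine ⟨(List.finRange L).flatMap (fun m => P.map (F m)), ?_, ?_, ?_⟩
  · rw [List.length_flatMap]
    have : ∀ m ∈ List.finRange L, (P.map (F m)).length = n * n - n := by
      intro m _; simp [hPlen]
    calc (List.map (List.length ∘ fun m => P.map (F m)) (List.finRange L)).sum
        = (List.map (fun _ : Fin L => n * n - n) (List.finRange L)).sum := by
          apply congrArg; exact List.map_congr_left (fun m hm => this m hm)
      _ = L * (n * n - n) := by simp [List.map_const', List.sum_replicate, mul_comm]
      _ ≤ L * n * (n - 1) := le_of_eq (by rw [mul_assoc, (Nat.mul_sub_one n n).symm])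
  · intro E hE
    rcases List.mem_flatMap.mp hE with ⟨m, _, hm⟩
    rcases List.mem_map.mp hm with ⟨p, hp, rfl⟩
    exact ⟨p.1, p.2, _, (hPmem p).mp hp, rfl⟩
  · -- the product is componentwise correct
    have key : ∀ i : I, ((List.finRange L).flatMap (fun m => P.map (F m))).prod.map
        (Pi.evalRingHom R i) = g i := by
      intro i
      have := map_list_prod ((Pi.evalRingHom R i).mapMatrix)
        ((List.finRange L).flatMap (fun m => P.map (F m)))
      rw [show (((List.finRange L).flatMap (fun m => P.map (F m))).prod.map
          (Pi.evalRingHom R i)) = (Pi.evalRingHom R i).mapMatrix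
          ((List.finRange L).flatMap (fun m => P.map (F m))).prod from rfl, this]
      rw [List.map_flatMap]
      have inner : ∀ m : Fin L,
          ((P.map (F m)).map ((Pi.evalRingHom R i).mapMatrix)).prod = padget i m := by
        intro m
        rw [List.map_map]
        rw [prod_map_single P hPnd (j i m, k i m)
          ((hPmem _).mpr (hjk i m)) _ ?_]
        · show (Pi.evalRingHom R i).mapMatrix (F m (j i m, k i m)) = padget i m
          rw [hF, map_add, map_one, RingHom.mapMatrix_apply, map_stdBasis, heq i m]
          simp
        · intro p hp hne
          show (Pi.evalRingHom R i).mapMatrix (F m p) = 1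
          rw [hF, map_add, map_one, RingHom.mapMatrix_apply, map_stdBasis]
          have hz : (Pi.evalRingHom R i)
              (fun i' => if (j i' m, k i' m) = p then ξ i' m else 0) = 0 := by
            show (if (j i m, k i m) = p then ξ i m else 0) = 0
            rw [if_neg (fun h => hne h.symm)]
          rw [hz, Matrix.single_zero, add_zero]
      calc ((List.finRange L).flatMap
            (fun m => (P.map (F m)).map ((Pi.evalRingHom R i).mapMatrix))).prod
          = ((List.finRange L).map
              (fun m => ((P.map (F m)).map ((Pi.evalRingHom R i).mapMatrix)).prod)).prod := by
            rw [List.flatMap, List.prod_flatten, List.map_map]; rfl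
        _ = ((List.finRange L).map (padget i)).prod := by
            apply congrArg; exact List.map_congr_left (fun m _ => inner m)
        _ = (List.ofFn (padget i)).prod := by rw [List.ofFn_eq_map]
        _ = (pad i).prod := by rw [hofn i]
        _ = g i := hpadprod i
    ext a b i
    have := congrFun (congrFun (key i) a) b
    simpa [Matrix.map_apply] using this
end

section
/- Let n ≥ 2 and R a commutative ring. Suppose there is NO bound L such that every element of the subgroup E(n,R) ≤ SL(n,R) generated by elementary transvections is a product of at most L elementary transvections. Then there exists a sequence (g_k) with g_k ∈ E(n,R) such that the element (g_k) of SL(n, R^ℕ) (with R^ℕ the countable product ring) does not lie in E(n, R^ℕ), the subgroup of SL(n, R^ℕ) generated by elementary transvections over R^ℕ. -/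
/-- `E(n,R)`: the subgroup (here: submonoid, which coincides with the generated
subgroup since the inverse of a transvection is a transvection) of `SL(n,R)`
generated by the elementary transvections. -/
def elemGroup (n : ℕ) (R : Type*) [CommRing R] :
    Submonoid (Matrix (Fin n) (Fin n) R) :=
  Submonoid.closure {E | IsElementary E}

/-!
Choose `g k ∈ E(n,R)` that is not a product of at most `k` transvections. Every ring
homomorphism maps a product of `N` transvections to a product of `N` transvections, so if
`(g k)_k` were a product of `N` transvections over `R^ℕ`, projecting to the `N`-th
coordinate would write `g N` as one over `R`.
-/

section Elementary

variable {n : ℕ} {R S : Type*} [CommRing R] [CommRing S]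

theorem IsElementary.map (f : R →+* S) {E : Matrix (Fin n) (Fin n) R} (hE : IsElementary E) :
    IsElementary (f.mapMatrix E) := by
  obtain ⟨j, k, ξ, hjk, rfl⟩ := hE
  exact ⟨j, k, f ξ, hjk, by
    rw [map_add, map_one, RingHom.mapMatrix_apply, Matrix.map_single]⟩

theorem exists_elementary_list_map (f : R →+* S) {l : List (Matrix (Fin n) (Fin n) R)}
    (hl : ∀ E ∈ l, IsElementary E) :
    ∃ l' : List (Matrix (Fin n) (Fin n) S),
      l'.length = l.length ∧ (∀ E ∈ l', IsElementary E) ∧ l'.prod = f.mapMatrix l.prod :=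
  ⟨l.map f.mapMatrix, l.length_map _,
    by simpa only [List.forall_mem_map] using fun E hE => (hl E hE).map f,
    (map_list_prod f.mapMatrix l).symm⟩

end Elementary

theorem unbounded_width_escapes_product_general
    {n : ℕ} (R : Type*) [CommRing R]
    (h : ¬ ∃ L : ℕ, ∀ g ∈ elemGroup n R,
      ∃ l : List (Matrix (Fin n) (Fin n) R),
        l.length ≤ L ∧ (∀ E ∈ l, IsElementary E) ∧ l.prod = g) :
    ∃ g : ℕ → Matrix (Fin n) (Fin n) R,
      (∀ k, g k ∈ elemGroup n R) ∧
      (Matrix.of (fun j k => fun i => g i j k) :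
          Matrix (Fin n) (Fin n) (ℕ → R)) ∉ elemGroup n (ℕ → R) := by
  push Not at h
  choose g hg hwide using h
  refine ⟨g, hg, fun hmem => ?_⟩
  obtain ⟨l, hl, hprod⟩ := Submonoid.exists_list_of_mem_closure hmem
  obtain ⟨l', hlen, hl', hprod'⟩ :=
    exists_elementary_list_map (Pi.evalRingHom (fun _ => R) l.length) hl
  exact hwide l.length l' hlen.le hl' (by rw [hprod', hprod]; rfl)

theorem unbounded_width_escapes_product
    {n : ℕ} (hn : 2 ≤ n) (R : Type*) [CommRing R]
    (h : ¬ ∃ L : ℕ, ∀ g ∈ elemGroup n R,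
      ∃ l : List (Matrix (Fin n) (Fin n) R),
        l.length ≤ L ∧ (∀ E ∈ l, IsElementary E) ∧ l.prod = g) :
    ∃ g : ℕ → Matrix (Fin n) (Fin n) R,
      (∀ k, g k ∈ elemGroup n R) ∧
      (Matrix.of (fun j k => fun i => g i j k) :
          Matrix (Fin n) (Fin n) (ℕ → R)) ∉ elemGroup n (ℕ → R) :=
  unbounded_width_escapes_product_general R h
end
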